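/- Let Ω₁, Ω₂ ⊂ ℝⁿ be disjoint open sets, δ₁ ≤ δ₂ positive reals, and for i=1,2 define the interaction domain 𝓘ᵢ = {y ∉ Ωᵢ : ∃ x ∈ Ωᵢ, |x−y| < δᵢ}, with 𝓘ᵢᴶ = 𝓘ᵢ ∩ Ω_j (j = 3−i) and 𝓘ᵢᴰ = 𝓘ᵢ \ 𝓘ᵢᴶ. Define Ω₁ᴶ = {y ∈ Ω₁ \ 𝓘₂ᴶ : ∃ x ∈ 𝓘₁ᴶ, |x−y| < δ₁}. Then if δ₁ ≤ δ₂, the set Ω₁ᴶ is empty. -/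
import Mathlib


open Set Metric

theorem stmt0 {n : ℕ} (Ω₁ Ω₂ : Set (EuclideanSpace ℝ (Fin n)))
    (hopen₁ : IsOpen Ω₁) (hopen₂ : IsOpen Ω₂) (hdisj : Disjoint Ω₁ Ω₂)
    (δ₁ δ₂ : ℝ) (hδ₁ : 0 < δ₁) (hδ₂ : 0 < δ₂) (hle : δ₁ ≤ δ₂)
    (I₁ I₂ I₁J I₂J I₁D I₂D Ω₁J : Set (EuclideanSpace ℝ (Fin n)))
    (hI₁ : I₁ = {y | y ∉ Ω₁ ∧ ∃ x ∈ Ω₁, dist x y < δ₁})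
    (hI₂ : I₂ = {y | y ∉ Ω₂ ∧ ∃ x ∈ Ω₂, dist x y < δ₂})
    (hI₁J : I₁J = I₁ ∩ Ω₂) (hI₂J : I₂J = I₂ ∩ Ω₁)
    (hI₁D : I₁D = I₁ \ I₁J) (hI₂D : I₂D = I₂ \ I₂J)
    (hΩ₁J : Ω₁J = {y | y ∈ Ω₁ \ I₂J ∧ ∃ x ∈ I₁J, dist x y < δ₁}) :
    Ω₁J = ∅ := by
  subst hΩ₁J hI₁J hI₂J hI₁ hI₂
  ext y
  simp only [mem_setOf_eq, mem_empty_iff_false, iff_false]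
  rintro ⟨⟨hyΩ₁, hyI₂J⟩, x, ⟨⟨hxI₁, hxΩ₂⟩, hxy⟩⟩
  exact hyI₂J ⟨⟨fun hyΩ₂ => hdisj.le_bot ⟨hyΩ₁, hyΩ₂⟩,
    ⟨x, hxΩ₂, hxy.trans_le hle⟩⟩, hyΩ₁⟩
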